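/- arXiv:2306.13331 — 2 statements merged into one kernel-verified Lean document; each statement's English description precedes it below -/
import Mathlib

section
/- Integral bound implies convergence: if x ∈ W^{1,∞}_loc([0,∞); ℝⁿ) satisfies ∫₀^∞ ‖x(t)‖² dt < ∞ and x' = Ax + Bu with u essentially bounded, then x(t) → 0 as t → ∞. -/
/-!
Put `f = log (1 + ‖x‖²)` with the Euclidean norm. Since `‖x'‖ ≤ a ‖x‖ + b`, the derivative
`f' = 2 ⟪x, x'⟫ / (1 + ‖x‖²)` is bounded, so `f` is Lipschitz, while `0 ≤ f ≤ ‖x‖²` makes `f`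
integrable. A Lipschitz integrable function tends to `0` (Barbalat): `‖f t‖` is controlled by its
average over `[t - δ, t]` up to `K δ`, and these averages vanish with the tail integrals.
Hence `‖x‖² = exp f - 1 → 0`.
-/

open Matrix MeasureTheory

open Set Filter Topology
open scoped NNReal RealInnerProductSpace

section Barbalat

variable {E : Type*} [NormedAddCommGroup E]

theorem LipschitzOnWith.mul_norm_le_intervalIntegral_add {g : ℝ → E} {K : ℝ≥0} {s : Set ℝ}
    (hg : LipschitzOnWith K g s) {t δ : ℝ} (hδ : 0 ≤ δ) (hts : Icc (t - δ) t ⊆ s) :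
    δ * ‖g t‖ ≤ (∫ r in (t - δ)..t, ‖g r‖) + K * δ ^ 2 := by
  have hle : t - δ ≤ t := by linarith
  have hint : IntervalIntegrable (fun r => ‖g r‖) volume (t - δ) t :=
    ((hg.continuousOn.mono hts).norm).intervalIntegrable_of_Icc hle
  have hpoint : ∀ r ∈ Icc (t - δ) t, ‖g t‖ ≤ ‖g r‖ + K * δ := fun r hr =>
    calc ‖g t‖ ≤ ‖g r‖ + ‖g t - g r‖ := norm_le_norm_add_norm_sub' _ _
      _ ≤ ‖g r‖ + K * ‖t - r‖ :=
        add_le_add_right (hg.norm_sub_le (hts (right_mem_Icc.2 hle)) (hts hr)) _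
      _ ≤ ‖g r‖ + K * δ := by
        gcongr
        rw [Real.norm_of_nonneg (by linarith [hr.2])]
        linarith [hr.1]
  calc δ * ‖g t‖ = ∫ _ in (t - δ)..t, ‖g t‖ := by simp
    _ ≤ ∫ r in (t - δ)..t, (‖g r‖ + K * δ) :=
      intervalIntegral.integral_mono_on hle intervalIntegrable_const
        (hint.add intervalIntegrable_const) hpoint
    _ = (∫ r in (t - δ)..t, ‖g r‖) + K * δ ^ 2 := by
      rw [intervalIntegral.integral_add hint intervalIntegrable_const]
      simp [sq, mul_left_comm]

theorem tendsto_intervalIntegral_sub_const_atTop [NormedSpace ℝ E] {f : ℝ → E} {a : ℝ}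
    (hf : IntegrableOn f (Ioi a)) (δ : ℝ) :
    Tendsto (fun t => ∫ s in (t - δ)..t, f s) atTop (𝓝 0) := by
  have hδ : Tendsto (fun t : ℝ => t - δ) atTop atTop :=
    tendsto_atTop_add_const_right _ _ tendsto_id
  have htails := (tendsto_integral_Ioi_zero (f := f) (μ := volume) hδ).sub
    (tendsto_integral_Ioi_zero (f := f) (μ := volume) tendsto_id)
  rw [sub_zero] at htails
  refine htails.congr' ?_
  filter_upwards [hδ.eventually_ge_atTop a, eventually_ge_atTop a] with t hδt ht
  exact intervalIntegral.integral_Ioi_sub_Ioi' (hf.mono_set (Ioi_subset_Ioi hδt))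
    (hf.mono_set (Ioi_subset_Ioi ht))

theorem tendsto_zero_of_lipschitzOnWith_of_integrableOn {g : ℝ → E} {K : ℝ≥0} {a : ℝ}
    (hg : LipschitzOnWith K g (Ici a)) (hint : IntegrableOn g (Ici a)) :
    Tendsto g atTop (𝓝 0) := by
  rw [Metric.tendsto_nhds]
  intro ε hε
  set δ : ℝ := ε / (2 * (K + 1)) with hδ_def
  have hδ : 0 < δ := by positivity
  have hKδ : K * δ < ε / 2 := by
    rw [hδ_def, mul_div_assoc', div_lt_div_iff₀ (by positivity) two_pos]
    nlinarith [K.coe_nonneg]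
  have hwindow :=
    tendsto_intervalIntegral_sub_const_atTop ((hint.mono_set Ioi_subset_Ici_self).norm) δ
  filter_upwards [hwindow.eventually (gt_mem_nhds (by positivity : 0 < δ * (ε / 2))),
    eventually_ge_atTop (a + δ)] with t hsmall ht
  have hest := hg.mul_norm_le_intervalIntegral_add hδ.le
    fun r hr => (by linarith [hr.1] : a ≤ r)
  rw [dist_zero_right]
  nlinarith [mul_lt_mul_of_pos_left hKδ hδ]

end Barbalat

section LogEnergy

variable {F : Type*} [NormedAddCommGroup F] [InnerProductSpace ℝ F]

theorem norm_two_inner_div_one_add_norm_sq_le {y v : F} {a b : ℝ} (ha : 0 ≤ a) (hb : 0 ≤ b)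
    (hv : ‖v‖ ≤ a * ‖y‖ + b) : ‖2 * ⟪y, v⟫ / (1 + ‖y‖ ^ 2)‖ ≤ 2 * a + b := by
  have hpos : 0 < 1 + ‖y‖ ^ 2 := by positivity
  rw [Real.norm_eq_abs, abs_div, abs_of_pos hpos, div_le_iff₀ hpos, abs_mul, abs_two]
  have hinner := abs_real_inner_le_norm y v
  have hyv : ‖y‖ * ‖v‖ ≤ ‖y‖ * (a * ‖y‖ + b) := mul_le_mul_of_nonneg_left hv (norm_nonneg y)
  nlinarith [sq_nonneg (‖y‖ - 1)]

theorem lipschitzOnWith_log_one_add_norm_sq {y y' : ℝ → F} {s : Set ℝ} {a b : ℝ≥0}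
    (hs : Convex ℝ s) (hy : ∀ t ∈ s, HasDerivWithinAt y (y' t) s t)
    (hy' : ∀ t ∈ s, ‖y' t‖ ≤ a * ‖y t‖ + b) :
    LipschitzOnWith (2 * a + b) (fun t => Real.log (1 + ‖y t‖ ^ 2)) s :=
  hs.lipschitzOnWith_of_nnnorm_hasDerivWithin_le
    (fun t ht => ((hy t ht).norm_sq.const_add 1).log (by positivity)) fun t ht => by
      rw [← NNReal.coe_le_coe, coe_nnnorm]
      exact norm_two_inner_div_one_add_norm_sq_le a.coe_nonneg b.coe_nonneg (hy' t ht)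

theorem tendsto_zero_of_integrableOn_norm_sq {y y' : ℝ → F} {t₀ : ℝ} {a b : ℝ≥0}
    (hy : ∀ t ∈ Ici t₀, HasDerivWithinAt y (y' t) (Ici t₀) t)
    (hy' : ∀ t ∈ Ici t₀, ‖y' t‖ ≤ a * ‖y t‖ + b)
    (hL2 : IntegrableOn (fun t => ‖y t‖ ^ 2) (Ici t₀)) :
    Tendsto y atTop (𝓝 0) := by
  have hg := lipschitzOnWith_log_one_add_norm_sq (convex_Ici t₀) hy hy'
  have hgint : IntegrableOn (fun t => Real.log (1 + ‖y t‖ ^ 2)) (Ici t₀) := by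
    refine hL2.mono' (hg.continuousOn.aestronglyMeasurable measurableSet_Ici)
      (Eventually.of_forall fun t => ?_)
    rw [Real.norm_of_nonneg (Real.log_nonneg (by simp))]
    linarith [Real.log_le_sub_one_of_pos (by positivity : 0 < 1 + ‖y t‖ ^ 2)]
  have hsqrt : Tendsto (fun r => √(Real.exp r - 1)) (𝓝 0) (𝓝 0) := by
    simpa using ((Real.continuous_exp.sub (continuous_const (y := (1 : ℝ)))).sqrt).tendsto 0
  rw [tendsto_zero_iff_norm_tendsto_zero]
  convert hsqrt.comp (tendsto_zero_of_lipschitzOnWith_of_integrableOn hg hgint) using 2 with t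
  simp [Real.exp_log (by positivity : 0 < 1 + ‖y t‖ ^ 2)]

end LogEnergy

theorem EuclideanSpace.norm_toLp_sq {ι : Type*} [Fintype ι] (v : ι → ℝ) :
    ‖WithLp.toLp 2 v‖ ^ 2 = v ⬝ᵥ v := by
  rw [← real_inner_self_eq_norm_sq, EuclideanSpace.inner_toLp_toLp, star_trivial]

/-- If `x` solves `x' = Ax + Bu` with `u` (essentially) bounded and
`∫₀^∞ ‖x(t)‖² dt < ∞`, then `x(t) → 0` as `t → ∞`. -/
theorem L2_implies_convergence {n m : ℕ}
    (A : Matrix (Fin n) (Fin n) ℝ) (B : Matrix (Fin n) (Fin m) ℝ)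
    (x : ℝ → (Fin n → ℝ)) (u : ℝ → (Fin m → ℝ))
    (hx : ∀ t : ℝ, 0 ≤ t → HasDerivAt x (A.mulVec (x t) + B.mulVec (u t)) t)
    (hu : ∃ C : ℝ, ∀ t : ℝ, 0 ≤ t → ‖u t‖ ≤ C)
    (hL2 : IntegrableOn (fun t => x t ⬝ᵥ x t) (Set.Ici (0 : ℝ)) volume) :
    Filter.Tendsto x Filter.atTop (nhds 0) := by
  obtain ⟨C, hC⟩ := hu
  -- The sup norm of `Fin n → ℝ` is not an inner product norm; pass to `EuclideanSpace`.
  let e := (EuclideanSpace.equiv (Fin n) ℝ).symm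
  let LA := toEuclideanCLM (n := Fin n) (𝕜 := ℝ) A
  let LB : (Fin m → ℝ) →L[ℝ] EuclideanSpace ℝ (Fin n) :=
    e.toContinuousLinearMap ∘L LinearMap.toContinuousLinearMap (Matrix.toLin' B)
  have hy : ∀ t ∈ Ici (0 : ℝ), HasDerivWithinAt (e ∘ x) (LA (e (x t)) + LB (u t)) (Ici 0) t :=
    fun t ht => by
      have h := (e.hasFDerivAt.comp_hasDerivAt t (hx t ht)).hasDerivWithinAt (s := Ici 0)
      rwa [map_add] at h
  have hy' : ∀ t ∈ Ici (0 : ℝ),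
      ‖LA (e (x t)) + LB (u t)‖ ≤ ‖LA‖₊ * ‖e (x t)‖ + (‖LB‖₊ * C.toNNReal : ℝ≥0) :=
    fun t ht => norm_add_le_of_le (LA.le_opNorm _) <| by
      simpa using LB.le_opNorm_of_le ((hC t ht).trans (Real.le_coe_toNNReal C))
  have hL2' : IntegrableOn (fun t => ‖e (x t)‖ ^ 2) (Ici 0) := by
    simpa [e, EuclideanSpace.norm_toLp_sq] using hL2
  simpa [Function.comp_def] using
    (e.symm.continuous.tendsto 0).comp (tendsto_zero_of_integrableOn_norm_sq hy hy' hL2')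
end

section
/- For two subspaces V₁, V₂ ⊆ ℝⁿ there exists c > 0 such that dist(x, V₁)² + dist(x, V₂)² ≥ c · dist(x, V₁ ∩ V₂)² for all x ∈ ℝⁿ. -/
/-!
The linear map `E ⧸ (V₁ ⊓ V₂) → E ⧸ V₁ × E ⧸ V₂` induced by the two quotient maps is injective, and
an injective linear map out of a finite-dimensional space is bounded below. Since the quotient norm
of `x` is its distance to the subspace, this bounds `dist(x, V₁ ∩ V₂)` by a multiple of
`max (dist(x, V₁)) (dist(x, V₂))`.
-/

open Metric

theorem Submodule.Quotient.norm_mk_eq_infDist {R M : Type*} [Ring R] [SeminormedAddCommGroup M]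
    [Module R M] (S : Submodule R M) (x : M) :
    ‖(Submodule.Quotient.mk x : M ⧸ S)‖ = infDist x S :=
  QuotientAddGroup.norm_mk (S := S.toAddSubgroup) x

theorem Submodule.exists_pos_infDist_inf_le_mul_max {𝕜 E : Type*} [NontriviallyNormedField 𝕜]
    [CompleteSpace 𝕜] [NormedAddCommGroup E] [NormedSpace 𝕜 E] [FiniteDimensional 𝕜 E]
    (K₁ K₂ : Submodule 𝕜 E) :
    ∃ C > 0, ∀ x : E, infDist x ((K₁ ⊓ K₂ : Submodule 𝕜 E) : Set E)
      ≤ C * max (infDist x (K₁ : Set E)) (infDist x (K₂ : Set E)) := by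
  have := K₁.closed_of_finiteDimensional
  have := K₂.closed_of_finiteDimensional
  have := (K₁ ⊓ K₂).closed_of_finiteDimensional
  let f := (K₁ ⊓ K₂).liftQ (K₁.mkQ.prod K₂.mkQ) (by simp [LinearMap.ker_prod])
  have hf : LinearMap.ker f = ⊥ :=
    Submodule.ker_liftQ_eq_bot' _ _ (by simp [LinearMap.ker_prod])
  obtain ⟨C, hC, hCf⟩ := f.exists_antilipschitzWith hf
  refine ⟨C, hC, fun x ↦ ?_⟩
  simpa only [f, Submodule.liftQ_apply, LinearMap.prod_apply, Function.prod, Submodule.mkQ_apply,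
    Prod.norm_def, Submodule.Quotient.norm_mk_eq_infDist] using
    hCf.le_mul_norm (map_zero f) (Submodule.Quotient.mk x)

/-- For subspaces `V₁, V₂ ⊆ ℝⁿ` there is `c > 0` with
`dist(x,V₁)² + dist(x,V₂)² ≥ c · dist(x, V₁ ∩ V₂)²` for all `x`. -/
theorem dist_inter_subspaces {n : ℕ}
    (V₁ V₂ : Submodule ℝ (EuclideanSpace ℝ (Fin n))) :
    ∃ c > (0 : ℝ), ∀ x : EuclideanSpace ℝ (Fin n),
      c * (Metric.infDist x ((V₁ ⊓ V₂ : Submodule ℝ (EuclideanSpace ℝ (Fin n))) : Set (EuclideanSpace ℝ (Fin n)))) ^ 2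
        ≤ (Metric.infDist x (V₁ : Set (EuclideanSpace ℝ (Fin n)))) ^ 2
          + (Metric.infDist x (V₂ : Set (EuclideanSpace ℝ (Fin n)))) ^ 2 := by
  obtain ⟨C, hC, hCx⟩ := V₁.exists_pos_infDist_inf_le_mul_max V₂
  refine ⟨(C ^ 2)⁻¹, by positivity, fun x ↦ ?_⟩
  set d₁ := infDist x (V₁ : Set (EuclideanSpace ℝ (Fin n)))
  set d₂ := infDist x (V₂ : Set (EuclideanSpace ℝ (Fin n)))
  have hmax : max d₁ d₂ ^ 2 ≤ d₁ ^ 2 + d₂ ^ 2 := by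
    rcases max_choice d₁ d₂ with h | h <;> rw [h] <;> nlinarith [sq_nonneg d₁, sq_nonneg d₂]
  rw [inv_mul_le_iff₀ (by positivity)]
  calc _ ≤ (C * max d₁ d₂) ^ 2 := pow_le_pow_left₀ infDist_nonneg (hCx x) 2
    _ = C ^ 2 * max d₁ d₂ ^ 2 := mul_pow _ _ _
    _ ≤ C ^ 2 * (d₁ ^ 2 + d₂ ^ 2) := by gcongr
end
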